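/- Let λ > 0 and assume that for every i the map ℓ_{y_i} : q ↦ ℓ(q, y_i) is differentiable on ℝ^{d_y}. Fix any θ ∈ ℝ^{d_θ} and let (a, b, W) be a local minimum of the map (a,b,W) ↦ L̃(θ,a,b,W). Then for every k ∈ {1,…,d_y}, every natural number p, and every u ∈ ℝ^{d_x}: ∑_{i=1}^m (∇ℓ_{y_i}(f(x_i;θ)))_k · exp(⟨w_k, x_i⟩ + b_k) · (⟨u, x_i⟩)^p = 0. -/

import Mathlib

/-!
Replacing `(a, b)` by `(e^{-s} a, b + s 𝟙)` leaves the added neuron unchanged while multiplying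
the penalty `λ‖a‖²` by `e^{-2s}`, so at a local minimum `a = 0`. Then the loss no longer depends
on `W`, hence every `(0, b, W')` with `W'` close to `W` is again a local minimum. The first-order
condition in the direction of `a_k` at `(0, b, (w_j + t u)_j)` reads
`∑ᵢ (∇ℓ_{yᵢ}(f(xᵢ;θ)))ₖ e^{⟨wₖ, xᵢ⟩ + bₖ} e^{t ⟨u, xᵢ⟩} = 0` for all small `t`, and
differentiating `p` times at `t = 0` gives the moment condition.
-/

open scoped RealInnerProductSpace

noncomputable section

def addedNeuron (dx dy : ℕ) (a b : EuclideanSpace ℝ (Fin dy))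
    (W : Fin dy → EuclideanSpace ℝ (Fin dx)) (x : EuclideanSpace ℝ (Fin dx)) :
    EuclideanSpace ℝ (Fin dy) :=
  WithLp.toLp 2 (fun k => a k * Real.exp (⟪W k, x⟫ + b k))

open Filter Topology Real

theorem iteratedDeriv_sum_mul_exp {ι : Type*} (s : Finset ι) (c r : ι → ℝ) (p : ℕ) :
    iteratedDeriv p (fun t => ∑ i ∈ s, c i * exp (r i * t)) =
      fun t => ∑ i ∈ s, c i * r i ^ p * exp (r i * t) := by
  induction p with
  | zero => simp
  | succ p ih =>
    ext t
    rw [iteratedDeriv_succ, ih]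
    refine (HasDerivAt.fun_sum fun i _ => ?_).deriv
    exact (((hasDerivAt_id' t).const_mul (r i)).exp.const_mul (c i * r i ^ p)).congr_deriv
      (by ring)

theorem sum_mul_pow_eq_zero_of_eventuallyEq_zero {ι : Type*} {s : Finset ι} {c r : ι → ℝ}
    (h : (fun t => ∑ i ∈ s, c i * exp (r i * t)) =ᶠ[𝓝 0] 0) (p : ℕ) :
    ∑ i ∈ s, c i * r i ^ p = 0 := by
  simpa [iteratedDeriv_sum_mul_exp] using h.iteratedDeriv_eq p

theorem IsLocalMin.eventually_isLocalMin_of_eq {X β : Type*} [TopologicalSpace X] [Preorder β]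
    {f : X → β} {a : X} (h : IsLocalMin f a) : ∀ᶠ y in 𝓝 a, f y = f a → IsLocalMin f y :=
  h.eventually_nhds.mono fun _ hy hfy => by rwa [IsLocalMin, IsMinFilter, hfy]

section AddedNeuron

variable {dx dy : ℕ} (a b : EuclideanSpace ℝ (Fin dy)) (W : Fin dy → EuclideanSpace ℝ (Fin dx))

theorem addedNeuron_zero_left (x : EuclideanSpace ℝ (Fin dx)) : addedNeuron dx dy 0 b W x = 0 := by
  ext k
  simp [addedNeuron]

theorem addedNeuron_add_smul_left (x : EuclideanSpace ℝ (Fin dx)) (v : EuclideanSpace ℝ (Fin dy))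
    (ε : ℝ) :
    addedNeuron dx dy (a + ε • v) b W x =
      addedNeuron dx dy a b W x + ε • addedNeuron dx dy v b W x := by
  ext k
  simp only [addedNeuron, PiLp.add_apply, PiLp.smul_apply, smul_eq_mul]
  ring

theorem addedNeuron_exp_neg_smul_add_smul_one (s : ℝ) :
    addedNeuron dx dy (exp (-s) • a) (b + s • WithLp.toLp 2 1) W = addedNeuron dx dy a b W := by
  ext x k
  simp only [addedNeuron, PiLp.add_apply, PiLp.smul_apply, smul_eq_mul, Pi.one_apply]
  rw [mul_comm (exp (-s)), mul_assoc, ← exp_add]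
  ring_nf

theorem inner_addedNeuron_single (x : EuclideanSpace ℝ (Fin dx)) (g : EuclideanSpace ℝ (Fin dy))
    (k : Fin dy) :
    ⟪g, addedNeuron dx dy (EuclideanSpace.single k 1) b W x⟫ = g k * exp (⟪W k, x⟫ + b k) := by
  simp [PiLp.inner_apply, addedNeuron, mul_comm]

end AddedNeuron

theorem eq_zero_of_isLocalMin_add_mul_norm_sq {dx dy : ℕ}
    (G : (EuclideanSpace ℝ (Fin dx) → EuclideanSpace ℝ (Fin dy)) → ℝ) {lam : ℝ} (hlam : 0 < lam)
    {a b : EuclideanSpace ℝ (Fin dy)} {W : Fin dy → EuclideanSpace ℝ (Fin dx)}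
    (hmin : IsLocalMin (fun p : EuclideanSpace ℝ (Fin dy) × EuclideanSpace ℝ (Fin dy) ×
        (Fin dy → EuclideanSpace ℝ (Fin dx)) =>
        G (addedNeuron dx dy p.1 p.2.1 p.2.2) + lam * ‖p.1‖ ^ 2) (a, b, W)) :
    a = 0 := by
  set γ : ℝ → EuclideanSpace ℝ (Fin dy) × EuclideanSpace ℝ (Fin dy) ×
      (Fin dy → EuclideanSpace ℝ (Fin dx)) :=
    fun s => (exp (-s) • a, b + s • WithLp.toLp 2 1, W)
  have hγ0 : γ 0 = (a, b, W) := by simp [γ]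
  rw [← hγ0] at hmin
  have hcurve : ∀ s, G (addedNeuron dx dy (γ s).1 (γ s).2.1 (γ s).2.2) + lam * ‖(γ s).1‖ ^ 2 =
      G (addedNeuron dx dy a b W) + lam * ‖a‖ ^ 2 * exp (-s) ^ 2 := by
    intro s
    simp only [γ, addedNeuron_exp_neg_smul_add_smul_one, norm_smul, norm_eq_abs,
      abs_of_pos (exp_pos _)]
    ring
  have hloc : IsLocalMin (_ ∘ γ) 0 :=
    hmin.comp_tendsto ((show Continuous γ by fun_prop).tendsto 0)
  simp only [Function.comp_def, hcurve] at hloc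
  have hderiv : HasDerivAt (fun s => G (addedNeuron dx dy a b W) + lam * ‖a‖ ^ 2 * exp (-s) ^ 2)
      (-(2 * (lam * ‖a‖ ^ 2))) 0 :=
    ((((hasDerivAt_id' 0).neg.exp.pow 2).const_mul (lam * ‖a‖ ^ 2)).const_add
      (G (addedNeuron dx dy a b W))).congr_deriv (by norm_num; ring)
  simpa [hlam.ne'] using hloc.hasDerivAt_eq_zero hderiv

section PenalizedLoss

variable {m dx dy : ℕ} (x : Fin m → EuclideanSpace ℝ (Fin dx))
  (z : Fin m → EuclideanSpace ℝ (Fin dy)) (L : Fin m → EuclideanSpace ℝ (Fin dy) → ℝ) (lam : ℝ)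

/-- The objective `L̃(θ, ·)`, with `z i = f(x i; θ)` and `L i = ℓ_{y i}`. -/
def penalizedLoss (p : EuclideanSpace ℝ (Fin dy) × EuclideanSpace ℝ (Fin dy) ×
    (Fin dy → EuclideanSpace ℝ (Fin dx))) : ℝ :=
  1 / m * ∑ i, L i (z i + addedNeuron dx dy p.1 p.2.1 p.2.2 (x i)) + lam * ‖p.1‖ ^ 2

variable {x z L lam}

theorem hasDerivAt_penalizedLoss_add_smul_left {a b : EuclideanSpace ℝ (Fin dy)}
    {W : Fin dy → EuclideanSpace ℝ (Fin dx)}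
    (hL : ∀ i, DifferentiableAt ℝ (L i) (z i + addedNeuron dx dy a b W (x i)))
    (v : EuclideanSpace ℝ (Fin dy)) :
    HasDerivAt (fun ε : ℝ => penalizedLoss x z L lam (a + ε • v, b, W))
      (1 / m * ∑ i, ⟪gradient (L i) (z i + addedNeuron dx dy a b W (x i)),
        addedNeuron dx dy v b W (x i)⟫ + lam * (2 * ⟪a, v⟫)) 0 := by
  simp only [penalizedLoss, addedNeuron_add_smul_left, ← add_assoc]
  refine ((HasDerivAt.fun_sum fun i _ => ?_).const_mul _).add ?_
  · refine (hL i).hasGradientAt.hasFDerivAt.comp_hasDerivAt_of_eq 0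
      (((hasDerivAt_id' 0).smul_const _).const_add _) (by simp) |>.congr_deriv ?_
    simp
  · exact ((((hasDerivAt_id' 0).smul_const v).const_add a).norm_sq.const_mul lam).congr_deriv
      (by simp)

theorem sum_gradient_mul_exp_eq_zero_of_isLocalMin (hm : 0 < m) {b : EuclideanSpace ℝ (Fin dy)}
    {W : Fin dy → EuclideanSpace ℝ (Fin dx)} (hL : ∀ i, DifferentiableAt ℝ (L i) (z i))
    (hmin : IsLocalMin (penalizedLoss x z L lam) (0, b, W)) (k : Fin dy) :
    ∑ i, gradient (L i) (z i) k * exp (⟪W k, x i⟫ + b k) = 0 := by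
  set γ : ℝ → EuclideanSpace ℝ (Fin dy) × EuclideanSpace ℝ (Fin dy) ×
      (Fin dy → EuclideanSpace ℝ (Fin dx)) := fun ε => (0 + ε • EuclideanSpace.single k 1, b, W)
  have hγ0 : γ 0 = (0, b, W) := by simp [γ]
  rw [← hγ0] at hmin
  have hline : IsLocalMin (penalizedLoss x z L lam ∘ γ) 0 :=
    hmin.comp_tendsto ((show Continuous γ by fun_prop).tendsto 0)
  have hderiv := hasDerivAt_penalizedLoss_add_smul_left (x := x) (lam := lam) (a := 0) (b := b)
    (W := W) (by simpa [addedNeuron_zero_left] using hL) (EuclideanSpace.single k 1)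
  have h := hline.hasDerivAt_eq_zero hderiv
  simp only [addedNeuron_zero_left, add_zero, inner_addedNeuron_single, inner_zero_left,
    mul_zero] at h
  exact (mul_eq_zero.mp h).resolve_left (by positivity)

end PenalizedLoss
theorem local_min_moment_conditions_general
    (m dx dy dθ : ℕ) (hm : 0 < m)
    (x : Fin m → EuclideanSpace ℝ (Fin dx))
    (y : Fin m → EuclideanSpace ℝ (Fin dy))
    (f : EuclideanSpace ℝ (Fin dx) → EuclideanSpace ℝ (Fin dθ) → EuclideanSpace ℝ (Fin dy))
    (ℓ : EuclideanSpace ℝ (Fin dy) → EuclideanSpace ℝ (Fin dy) → ℝ)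
    (hdiff : ∀ i : Fin m, Differentiable ℝ (fun q => ℓ q (y i)))
    (lam : ℝ) (hlam : 0 < lam)
    (Lt : EuclideanSpace ℝ (Fin dθ) → EuclideanSpace ℝ (Fin dy) → EuclideanSpace ℝ (Fin dy) →
      (Fin dy → EuclideanSpace ℝ (Fin dx)) → ℝ)
    (hLt : ∀ θ a b W, Lt θ a b W =
      (1 / (m : ℝ)) * ∑ i, ℓ (f (x i) θ + addedNeuron dx dy a b W (x i)) (y i)
        + lam * ‖a‖ ^ 2)
    (θ : EuclideanSpace ℝ (Fin dθ)) (a b : EuclideanSpace ℝ (Fin dy))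
    (W : Fin dy → EuclideanSpace ℝ (Fin dx))
    (hmin : IsLocalMin (fun p : EuclideanSpace ℝ (Fin dy) × EuclideanSpace ℝ (Fin dy) ×
        (Fin dy → EuclideanSpace ℝ (Fin dx)) =>
        Lt θ p.1 p.2.1 p.2.2) (a, b, W)) :
    ∀ (k : Fin dy) (p : ℕ) (u : EuclideanSpace ℝ (Fin dx)),
      ∑ i, (gradient (fun q => ℓ q (y i)) (f (x i) θ)) k *
        Real.exp (⟪W k, x i⟫ + b k) * (⟪u, x i⟫ : ℝ) ^ p = 0 := by
  intro k p u
  set F := penalizedLoss x (fun i => f (x i) θ) (fun i q => ℓ q (y i)) lam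
  rw [show (fun p => Lt θ p.1 p.2.1 p.2.2) = F from funext fun _ => hLt ..] at hmin
  obtain rfl : a = 0 := eq_zero_of_isLocalMin_add_mul_norm_sq
    (fun N => 1 / m * ∑ i, ℓ (f (x i) θ + N (x i)) (y i)) hlam hmin
  have hshift : ∀ᶠ t in 𝓝 (0 : ℝ), IsLocalMin F (0, b, fun j => W j + t • u) := by
    have hγ : Tendsto (fun t : ℝ => ((0 : EuclideanSpace ℝ (Fin dy)), b, fun j => W j + t • u))
        (𝓝 0) (𝓝 (0, b, W)) :=
      (by fun_prop : Continuous _).tendsto' 0 _ (by simp)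
    filter_upwards [hγ.eventually hmin.eventually_isLocalMin_of_eq] with t ht
    exact ht (by simp [F, penalizedLoss, addedNeuron_zero_left])
  refine sum_mul_pow_eq_zero_of_eventuallyEq_zero ?_ p
  filter_upwards [hshift] with t ht
  rw [Pi.zero_apply, ← sum_gradient_mul_exp_eq_zero_of_isLocalMin hm
    (fun i => (hdiff i).differentiableAt) ht k]
  refine Finset.sum_congr rfl fun i _ => ?_
  rw [inner_add_left, real_inner_smul_left, add_right_comm, exp_add (_ + _), mul_comm t, mul_assoc]

/-- Let `λ > 0` and each `ℓ_{y_i}` be differentiable. If `(a, b, W)` is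
a local minimum of `(a,b,W) ↦ L̃(θ,a,b,W)`, then for every output coordinate `k`, every
natural number `p` and every direction `u`,
`∑ᵢ (∇ℓ_{y_i}(f(x_i;θ)))ₖ · exp(⟨wₖ, xᵢ⟩ + bₖ) · ⟨u, xᵢ⟩ᵖ = 0`. -/
theorem local_min_moment_conditions
    (m dx dy dθ : ℕ) (hm : 0 < m) (hdx : 0 < dx) (hdy : 0 < dy) (hdθ : 0 < dθ)
    (x : Fin m → EuclideanSpace ℝ (Fin dx))
    (y : Fin m → EuclideanSpace ℝ (Fin dy))
    (f : EuclideanSpace ℝ (Fin dx) → EuclideanSpace ℝ (Fin dθ) → EuclideanSpace ℝ (Fin dy))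
    (ℓ : EuclideanSpace ℝ (Fin dy) → EuclideanSpace ℝ (Fin dy) → ℝ)
    (hdiff : ∀ i : Fin m, Differentiable ℝ (fun q => ℓ q (y i)))
    (lam : ℝ) (hlam : 0 < lam)
    (Lt : EuclideanSpace ℝ (Fin dθ) → EuclideanSpace ℝ (Fin dy) → EuclideanSpace ℝ (Fin dy) →
      (Fin dy → EuclideanSpace ℝ (Fin dx)) → ℝ)
    (hLt : ∀ θ a b W, Lt θ a b W =
      (1 / (m : ℝ)) * ∑ i, ℓ (f (x i) θ + addedNeuron dx dy a b W (x i)) (y i)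
        + lam * ‖a‖ ^ 2)
    (θ : EuclideanSpace ℝ (Fin dθ)) (a b : EuclideanSpace ℝ (Fin dy))
    (W : Fin dy → EuclideanSpace ℝ (Fin dx))
    (hmin : IsLocalMin (fun p : EuclideanSpace ℝ (Fin dy) × EuclideanSpace ℝ (Fin dy) ×
        (Fin dy → EuclideanSpace ℝ (Fin dx)) =>
        Lt θ p.1 p.2.1 p.2.2) (a, b, W)) :
    ∀ (k : Fin dy) (p : ℕ) (u : EuclideanSpace ℝ (Fin dx)),
      ∑ i, (gradient (fun q => ℓ q (y i)) (f (x i) θ)) k *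
        Real.exp (⟪W k, x i⟫ + b k) * (⟪u, x i⟫ : ℝ) ^ p = 0 :=
  local_min_moment_conditions_general m dx dy dθ hm x y f ℓ hdiff lam hlam Lt hLt θ a b W hmin
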